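/- arXiv:2311.12214 — 3 statements merged into one kernel-verified Lean document; each statement's English description precedes it below -/
import Mathlib

section
/- Let X₁, …, Xₙ be independent real random variables satisfying E[Xᵢᵏ] ≤ k! S² R^(k-2) / 2 for all k ≥ 2 and some constants S, R > 0. Set X̃ᵢ = Xᵢ - E[Xᵢ]. Then for all t > 0, P[∑ᵢ X̃ᵢ ≥ t] ≤ exp(-t² / (2(n S² + R t))). -/
/-!
Chernoff's bound reduces the tail estimate to the moment generating functions of the centred
summands, which multiply by independence. For `0 ≤ λ < 1 / R`, expanding `exp (λ Xᵢ)` as a power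
series and bounding the `k`-th moments (`k ≥ 2`) by the hypothesis leaves a geometric series:
`E[exp (λ Xᵢ)] ≤ 1 + λ E[Xᵢ] + S²λ² / (2 (1 - λR)) ≤ exp (λ E[Xᵢ] + S²λ² / (2 (1 - λR)))`.
The choice `λ = t / (n S² + R t)` then gives the exponent `-t² / (2 (n S² + R t))`.

Expanding under the integral is justified by dominated convergence with dominating function
`exp |λ Xᵢ| ≤ 2 cosh (λ Xᵢ)`, which is integrable because the series of `cosh` involves only even
moments; these are absolute moments, so the hypothesis controls them.
-/

open MeasureTheory ProbabilityTheory Real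
open scoped Nat

lemma Real.hasSum_pow_div_factorial (x : ℝ) : HasSum (fun k : ℕ => x ^ k / k !) (exp x) := by
  rw [exp_eq_exp_ℝ]
  exact NormedSpace.expSeries_div_hasSum_exp x

lemma Real.exp_abs_le_two_mul_cosh (x : ℝ) : exp |x| ≤ 2 * cosh x := by
  rw [← cosh_abs, cosh_eq]
  linarith [exp_pos (-|x|)]

namespace MeasureTheory

variable {α : Type*} [MeasurableSpace α] {μ : Measure α}

lemma integrable_of_hasSum_of_nonneg {f : ℕ → α → ℝ} {g : α → ℝ}
    (hg : AEStronglyMeasurable g μ) (hf_nonneg : ∀ k a, 0 ≤ f k a)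
    (hf : ∀ k, Integrable (f k) μ) (hsum : Summable fun k => ∫ a, f k a ∂μ)
    (hfg : ∀ a, HasSum (fun k => f k a) (g a)) : Integrable g μ := by
  have hg_nonneg : 0 ≤ᵐ[μ] g := ae_of_all _ fun a => (hfg a).nonneg (hf_nonneg · a)
  have hlint : ∫⁻ a, ENNReal.ofReal (g a) ∂μ = ENNReal.ofReal (∑' k, ∫ a, f k a ∂μ) := by
    calc ∫⁻ a, ENNReal.ofReal (g a) ∂μ = ∫⁻ a, ∑' k, ENNReal.ofReal (f k a) ∂μ := by
          congr 1 with a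
          rw [← (hfg a).tsum_eq, ENNReal.ofReal_tsum_of_nonneg (hf_nonneg · a) (hfg a).summable]
      _ = ∑' k, ∫⁻ a, ENNReal.ofReal (f k a) ∂μ :=
          lintegral_tsum fun k => (hf k).aemeasurable.ennreal_ofReal
      _ = ∑' k, ENNReal.ofReal (∫ a, f k a ∂μ) := by
          congr 1 with k
          rw [ofReal_integral_eq_lintegral_ofReal (hf k) (ae_of_all _ (hf_nonneg k))]
      _ = ENNReal.ofReal (∑' k, ∫ a, f k a ∂μ) :=
          (ENNReal.ofReal_tsum_of_nonneg (fun k => integral_nonneg (hf_nonneg k)) hsum).symm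
  exact ⟨hg, (hasFiniteIntegral_iff_ofReal hg_nonneg).2 (hlint ▸ ENNReal.ofReal_lt_top)⟩

end MeasureTheory

namespace ProbabilityTheory

variable {Ω : Type*} [MeasurableSpace Ω] {μ : Measure Ω} {Y : Ω → ℝ} {t : ℝ}

lemma hasSum_mgf_of_integrable_exp_abs_mul (hY : AEMeasurable Y μ)
    (h : Integrable (fun ω => exp |t * Y ω|) μ) :
    HasSum (fun k : ℕ => t ^ k * (∫ ω, Y ω ^ k ∂μ) / k !) (mgf Y μ t) := by
  have hterm : ∀ k : ℕ, ∫ ω, (t * Y ω) ^ k / (k ! : ℝ) ∂μ = t ^ k * (∫ ω, Y ω ^ k ∂μ) / k ! := by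
    intro k
    simp_rw [mul_pow, integral_div, integral_const_mul]
  simp_rw [← hterm]
  refine hasSum_integral_of_dominated_convergence (fun k ω => |t * Y ω| ^ k / k !)
    (fun k => ((hY.const_mul t).pow_const k).div_const _ |>.aestronglyMeasurable)
    (fun k => ae_of_all _ fun ω => by simp)
    (ae_of_all _ fun ω => (hasSum_pow_div_factorial _).summable) ?_
    (ae_of_all _ fun ω => hasSum_pow_div_factorial _)
  simpa only [(hasSum_pow_div_factorial _).tsum_eq] using h

section MomentGrowth

variable {S R l : ℝ}
  (hmom : ∀ k : ℕ, 2 ≤ k → ∫ ω, Y ω ^ k ∂μ ≤ (k ! : ℝ) * S ^ 2 * R ^ (k - 2) / 2)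
include hmom

lemma pow_mul_integral_pow_div_factorial_le (k : ℕ) (hl : 0 ≤ l ^ (k + 2)) :
    l ^ (k + 2) * (∫ ω, Y ω ^ (k + 2) ∂μ) / (k + 2)! ≤ S ^ 2 * l ^ 2 / 2 * (l * R) ^ k := by
  have hfac : (0 : ℝ) < (k + 2)! := by positivity
  rw [div_le_iff₀ hfac]
  calc l ^ (k + 2) * ∫ ω, Y ω ^ (k + 2) ∂μ
      ≤ l ^ (k + 2) * ((k + 2)! * S ^ 2 * R ^ k / 2) := by
        simpa using mul_le_mul_of_nonneg_left (hmom (k + 2) (by omega)) hl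
    _ = S ^ 2 * l ^ 2 / 2 * (l * R) ^ k * (k + 2)! := by ring

variable (hint : ∀ k : ℕ, Integrable (fun ω => Y ω ^ k) μ)
include hint

lemma integrable_cosh_mul_of_moment_le (hlR : |l * R| < 1) :
    Integrable (fun ω => cosh (l * Y ω)) μ := by
  have hmeas : AEMeasurable Y μ := by simpa using (hint 1).aemeasurable
  have hterm : ∀ k : ℕ, ∫ ω, (l * Y ω) ^ (2 * k) / ((2 * k)! : ℝ) ∂μ =
      l ^ (2 * k) * (∫ ω, Y ω ^ (2 * k) ∂μ) / (2 * k)! := by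
    intro k
    simp_rw [mul_pow, integral_div, integral_const_mul]
  have hr : (l * R) ^ 2 < 1 := by nlinarith [abs_nonneg (l * R), sq_abs (l * R)]
  refine integrable_of_hasSum_of_nonneg (by fun_prop)
    (fun k ω => div_nonneg ((even_two_mul k).pow_nonneg _) (by positivity))
    (fun k => ((hint (2 * k)).const_mul (l ^ (2 * k))).div_const ((2 * k)! : ℝ)
      |>.congr (ae_of_all _ fun ω => by simp [mul_pow])) ?_ (fun ω => hasSum_cosh _)
  simp_rw [hterm]
  refine (summable_nat_add_iff 1).1 <| Summable.of_nonneg_of_le (fun k => ?_) (fun k => ?_)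
    ((summable_geometric_of_lt_one (sq_nonneg _) hr).mul_left (S ^ 2 * l ^ 2 / 2))
  · exact div_nonneg (mul_nonneg ((even_two_mul (k + 1)).pow_nonneg _)
      (integral_nonneg fun ω => (even_two_mul (k + 1)).pow_nonneg _)) (by positivity)
  · simpa [mul_add, ← pow_mul] using
      pow_mul_integral_pow_div_factorial_le hmom (2 * k) ((even_two_mul (k + 1)).pow_nonneg _)

lemma integrable_exp_abs_mul_of_moment_le (hlR : |l * R| < 1) :
    Integrable (fun ω => exp |l * Y ω|) μ := by
  have hmeas : AEMeasurable Y μ := by simpa using (hint 1).aemeasurable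
  refine ((integrable_cosh_mul_of_moment_le hmom hint hlR).const_mul 2).mono' (by fun_prop) ?_
  exact ae_of_all _ fun ω => by
    simpa [abs_of_pos (exp_pos _)] using exp_abs_le_two_mul_cosh (l * Y ω)

lemma mgf_le_exp_of_moment_le [IsProbabilityMeasure μ] (hR : 0 ≤ R) (hl : 0 ≤ l)
    (hlR : l * R < 1) :
    mgf Y μ l ≤ exp (l * μ[Y] + S ^ 2 * l ^ 2 / (2 * (1 - l * R))) := by
  have hmeas : AEMeasurable Y μ := by simpa using (hint 1).aemeasurable
  have hlR' : |l * R| < 1 := by rwa [abs_of_nonneg (mul_nonneg hl hR)]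
  have hseries := hasSum_mgf_of_integrable_exp_abs_mul hmeas
    (integrable_exp_abs_mul_of_moment_le hmom hint hlR')
  rw [← hasSum_nat_add_iff' 2] at hseries
  have htail : mgf Y μ l - (1 + l * μ[Y]) ≤ S ^ 2 * l ^ 2 / 2 * (1 - l * R)⁻¹ := by
    refine hasSum_le (fun k => ?_) (by simpa [Finset.sum_range_succ] using hseries)
      ((hasSum_geometric_of_lt_one (mul_nonneg hl hR) hlR).mul_left _)
    exact pow_mul_integral_pow_div_factorial_le hmom k (by positivity)
  calc mgf Y μ l ≤ 1 + (l * μ[Y] + S ^ 2 * l ^ 2 / (2 * (1 - l * R))) := by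
        rw [← div_eq_mul_inv, div_div] at htail
        linarith
    _ ≤ _ := add_one_le_exp _ |>.trans_eq' (add_comm _ _)

lemma integrable_exp_mul_sub_integral_of_moment_le (hlR : |l * R| < 1) :
    Integrable (fun ω => exp (l * (Y ω - μ[Y]))) μ := by
  have hmeas : AEMeasurable Y μ := by simpa using (hint 1).aemeasurable
  refine ((integrable_exp_abs_mul_of_moment_le hmom hint hlR).const_mul (exp (-(l * μ[Y])))).mono'
    (by fun_prop) (ae_of_all _ fun ω => ?_)
  rw [norm_of_nonneg (exp_pos _).le, mul_sub, sub_eq_neg_add, exp_add]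
  gcongr
  exact le_abs_self _

lemma mgf_sub_integral_le_of_moment_le [IsProbabilityMeasure μ] (hR : 0 ≤ R) (hl : 0 ≤ l)
    (hlR : l * R < 1) :
    mgf (fun ω => Y ω - μ[Y]) μ l ≤ exp (S ^ 2 * l ^ 2 / (2 * (1 - l * R))) := by
  simp_rw [sub_eq_add_neg, mgf_add_const]
  calc mgf Y μ l * exp (l * -μ[Y])
      ≤ exp (l * μ[Y] + S ^ 2 * l ^ 2 / (2 * (1 - l * R))) * exp (l * -μ[Y]) := by
        gcongr
        exact mgf_le_exp_of_moment_le hmom hint hR hl hlR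
    _ = exp (S ^ 2 * l ^ 2 / (2 * (1 - l * R))) := by rw [← exp_add]; ring_nf

end MomentGrowth

lemma measure_sum_ge_le_of_iIndepFun_of_mgf_le {ι : Type*} {Z : ι → Ω → ℝ}
    (hindep : iIndepFun Z μ) (hmeas : ∀ i, Measurable (Z i)) (s : Finset ι) {l c : ℝ}
    (hl : 0 ≤ l) (hint : ∀ i ∈ s, Integrable (fun ω => exp (l * Z i ω)) μ)
    (hmgf : ∀ i ∈ s, mgf (Z i) μ l ≤ exp c) (t : ℝ) :
    μ.real {ω | t ≤ ∑ i ∈ s, Z i ω} ≤ exp (-l * t + s.card * c) := by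
  have := hindep.isProbabilityMeasure
  have hchernoff := measure_ge_le_exp_mul_mgf (X := ∑ i ∈ s, Z i) t hl
    (hindep.integrable_exp_mul_sum hmeas hint)
  simp only [Finset.sum_apply] at hchernoff
  refine hchernoff.trans ?_
  rw [hindep.mgf_sum hmeas, exp_add, exp_nat_mul, ← Finset.prod_const]
  gcongr with i hi
  · exact fun i _ => mgf_nonneg
  · exact hmgf i hi

end ProbabilityTheory

open ProbabilityTheory

theorem bernstein_one_tailed
    {Ω : Type*} [MeasureSpace Ω] [IsProbabilityMeasure (ℙ : Measure Ω)]
    {n : ℕ} (X : Fin n → Ω → ℝ) (S R : ℝ) (hS : 0 < S) (hR : 0 < R)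
    (hmeas : ∀ i, Measurable (X i))
    (hindep : iIndepFun X ℙ)
    (hint : ∀ i (k : ℕ), Integrable (fun ω => X i ω ^ k) ℙ)
    (hmom : ∀ i (k : ℕ), 2 ≤ k →
      ∫ ω, X i ω ^ k ≤ (Nat.factorial k : ℝ) * S ^ 2 * R ^ (k - 2) / 2)
    (t : ℝ) (ht : 0 < t) :
    (ℙ {ω | t ≤ ∑ i, (X i ω - ∫ ω', X i ω')}).toReal ≤
      Real.exp (-t ^ 2 / (2 * (n * S ^ 2 + R * t))) := by
  rcases Nat.eq_zero_or_pos n with rfl | hn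
  · simp [ht.not_ge, (exp_pos _).le]
  have hnS : 0 < n * S ^ 2 := by positivity
  set D := n * S ^ 2 + R * t with hD_def
  have hD : 0 < D := by positivity
  set l := t / D with hl_def
  have hl : 0 ≤ l := by positivity
  have hlR : l * R < 1 := by
    rw [div_mul_eq_mul_div, div_lt_one hD]
    linarith [mul_comm t R]
  have hlR' : |l * R| < 1 := by rwa [abs_of_nonneg (by positivity)]
  calc (ℙ {ω | t ≤ ∑ i, (X i ω - ∫ ω', X i ω')}).toReal
      ≤ exp (-l * t + Fintype.card (Fin n) * (S ^ 2 * l ^ 2 / (2 * (1 - l * R)))) :=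
        measure_sum_ge_le_of_iIndepFun_of_mgf_le
          (hindep.comp (fun i x => x - ∫ ω, X i ω) fun i => measurable_id.sub_const _)
          (fun i => (hmeas i).sub_const _) Finset.univ hl
          (fun i _ => integrable_exp_mul_sub_integral_of_moment_le (hmom i) (hint i) hlR')
          (fun i _ => mgf_sub_integral_le_of_moment_le (hmom i) (hint i) hR.le hl hlR) t
    _ = exp (-t ^ 2 / (2 * D)) := by
        congr 1
        have h1 : 1 - l * R = n * S ^ 2 / D := by
          rw [hl_def, hD_def]
          field_simp
          ring
        rw [Fintype.card_fin, h1, hl_def]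
        field_simp
        ring
end

section
/- Let α > 0 and let X be a random variable satisfying E[|X|^{kα}] ≤ k! S² R^(k-2) / 2 for all k ≥ 2 with constants S, R > 0. Then ‖X‖_{Ψ_α} ≤ (2 max(S, R))^{1/α}. -/
/-!
Put `M = max S R` and `t = (2M)^(1/α)`, so that `(|X|/t)^α = Y := |X|^α / (2M)`. Expanding
`exp Y = ∑ Y^k / k!` and integrating term by term, the Bernstein condition bounds the `k`-th term
by `2^{-k}` for `k ≥ 2`, and the first moment is at most `S ≤ M` by Jensen,
so `E[exp Y] ≤ ∑ 2^{-k} = 2`.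
-/

open MeasureTheory ProbabilityTheory

noncomputable def orliczSet {Ω : Type*} [MeasurableSpace Ω] (α : ℝ) (X : Ω → ℝ)
    (μ : Measure Ω) : Set ℝ :=
  {t : ℝ | 0 < t ∧ ∫ ω, Real.exp ((|X ω| / t) ^ α) ∂μ ≤ 2}

noncomputable def orliczNorm {Ω : Type*} [MeasurableSpace Ω] (α : ℝ) (X : Ω → ℝ)
    (μ : Measure Ω) : ℝ :=
  sInf (orliczSet α X μ)

open Real

section

variable {Ω : Type*} [MeasurableSpace Ω] {μ : Measure Ω}

lemma integrable_pow_div_factorial_of_integrable_exp {Y : Ω → ℝ}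
    (hY : AEStronglyMeasurable Y μ) (hY0 : 0 ≤ᵐ[μ] Y)
    (hexp : Integrable (fun ω ↦ exp (Y ω)) μ) (k : ℕ) :
    Integrable (fun ω ↦ Y ω ^ k / k.factorial) μ := by
  refine hexp.mono (by fun_prop) ?_
  filter_upwards [hY0] with ω hω
  rw [norm_of_nonneg (div_nonneg (pow_nonneg hω k) k.factorial.cast_nonneg),
    norm_of_nonneg (exp_nonneg _)]
  exact pow_div_factorial_le_exp _ hω k

lemma integrable_pow_of_integrable_exp_div {Y : Ω → ℝ}
    (hY : AEStronglyMeasurable Y μ) (hY0 : 0 ≤ᵐ[μ] Y) {c : ℝ} (hc : 0 < c)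
    (hexp : Integrable (fun ω ↦ exp (Y ω / c)) μ) (k : ℕ) :
    Integrable (fun ω ↦ Y ω ^ k) μ := by
  have hYc0 : 0 ≤ᵐ[μ] fun ω ↦ Y ω / c := by
    filter_upwards [hY0] with ω hω
    exact div_nonneg hω hc.le
  refine ((integrable_pow_div_factorial_of_integrable_exp (by fun_prop) hYc0 hexp k).const_mul
    (c ^ k * k.factorial)).congr (ae_of_all _ fun ω ↦ ?_)
  field_simp
  rw [← mul_pow, mul_div_cancel₀ _ hc.ne']

lemma integral_exp_le_tsum_of_integral_pow_div_factorial_le {Y : Ω → ℝ}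
    (hY : AEStronglyMeasurable Y μ) (hY0 : 0 ≤ᵐ[μ] Y)
    (hexp : Integrable (fun ω ↦ exp (Y ω)) μ) {b : ℕ → ℝ} (hb : Summable b)
    (hmom : ∀ k, ∫ ω, Y ω ^ k / k.factorial ∂μ ≤ b k) :
    ∫ ω, exp (Y ω) ∂μ ≤ ∑' k, b k := by
  have hint := integrable_pow_div_factorial_of_integrable_exp hY hY0 hexp
  have hnorm : ∀ k, ∫ ω, ‖Y ω ^ k / k.factorial‖ ∂μ = ∫ ω, Y ω ^ k / k.factorial ∂μ :=
    fun k ↦ integral_congr_ae <| by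
      filter_upwards [hY0] with ω hω
      exact norm_of_nonneg (div_nonneg (pow_nonneg hω k) k.factorial.cast_nonneg)
  have hsum : Summable fun k ↦ ∫ ω, Y ω ^ k / k.factorial ∂μ :=
    hb.of_nonneg_of_le (fun k ↦ hnorm k ▸ integral_nonneg fun _ ↦ norm_nonneg _) hmom
  calc ∫ ω, exp (Y ω) ∂μ = ∫ ω, ∑' k, Y ω ^ k / k.factorial ∂μ := by
        simp only [exp_eq_exp_ℝ, NormedSpace.exp_eq_tsum_div]
    _ = ∑' k, ∫ ω, Y ω ^ k / k.factorial ∂μ :=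
        (integral_tsum_of_summable_integral_norm hint (by simpa only [hnorm] using hsum)).symm
    _ ≤ ∑' k, b k := hsum.tsum_le_tsum hmom hb

lemma integral_le_of_integral_sq_le [IsProbabilityMeasure μ] {Z : Ω → ℝ}
    (hZ : AEStronglyMeasurable Z μ) (hZ2 : Integrable (fun ω ↦ Z ω ^ 2) μ)
    {S : ℝ} (hS : 0 ≤ S) (h : ∫ ω, Z ω ^ 2 ∂μ ≤ S ^ 2) :
    ∫ ω, Z ω ∂μ ≤ S := by
  have hvar := variance_eq_sub ((memLp_two_iff_integrable_sq hZ).2 hZ2) ▸ variance_nonneg Z μ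
  exact (abs_le_of_sq_le_sq' (by simp only [Pi.pow_apply] at hvar; linarith) hS).2

lemma integral_div_pow_div_factorial_le_half_pow [IsProbabilityMeasure μ] {Z : Ω → ℝ}
    (hZ : AEStronglyMeasurable Z μ) (hZ2 : Integrable (fun ω ↦ Z ω ^ 2) μ)
    {S R M : ℝ} (hS : 0 ≤ S) (hR : 0 ≤ R) (hSM : S ≤ M) (hRM : R ≤ M) (hM : 0 < M)
    (hmom : ∀ k : ℕ, 2 ≤ k → ∫ ω, Z ω ^ k ∂μ ≤ k.factorial * S ^ 2 * R ^ (k - 2) / 2)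
    (k : ℕ) :
    ∫ ω, (Z ω / (2 * M)) ^ k / k.factorial ∂μ ≤ (1 / 2) ^ k := by
  simp only [div_pow, one_pow, div_div, integral_div]
  rw [div_le_iff₀ (by positivity)]
  match k with
  | 0 => simp
  | 1 =>
    have h2 : ∫ ω, Z ω ^ 2 ∂μ ≤ S ^ 2 := by simpa using hmom 2 le_rfl
    have h1 := integral_le_of_integral_sq_le hZ hZ2 hS h2
    simp only [pow_one, Nat.factorial_one, Nat.cast_one, mul_one]
    linarith
  | n + 2 =>
    have hSR : S ^ 2 * R ^ n ≤ M ^ (n + 2) := by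
      rw [pow_add M n 2, mul_comm (M ^ n)]
      gcongr
    calc ∫ ω, Z ω ^ (n + 2) ∂μ ≤ (n + 2).factorial * S ^ 2 * R ^ n / 2 := by
          simpa using hmom (n + 2) le_add_self
      _ ≤ (n + 2).factorial * (S ^ 2 * R ^ n) := by
          rw [← mul_assoc]
          exact half_le_self (by positivity)
      _ ≤ (n + 2).factorial * M ^ (n + 2) := by gcongr
      _ = 1 / 2 ^ (n + 2) * ((2 * M) ^ (n + 2) * (n + 2).factorial) := by
          rw [mul_pow]; field_simp

end

theorem bernstein_condition_implies_orlicz_bound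
    {Ω : Type*} [MeasureSpace Ω] [IsProbabilityMeasure (ℙ : Measure Ω)]
    (α : ℝ) (hα : 0 < α) (X : Ω → ℝ) (hX : Measurable X)
    (S R : ℝ) (hS : 0 < S) (hR : 0 < R)
    (hmom : ∀ k : ℕ, 2 ≤ k →
      ∫ ω, |X ω| ^ ((k : ℝ) * α) ≤ (Nat.factorial k : ℝ) * S ^ 2 * R ^ (k - 2) / 2) :
    (orliczSet α X ℙ).Nonempty ∧
      orliczNorm α X ℙ ≤ (2 * max S R) ^ (1 / α) := by
  set M := max S R
  have hM : 0 < M := lt_max_of_lt_left hS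
  set t := (2 * M) ^ (1 / α)
  have ht : 0 < t := by positivity
  set Z : Ω → ℝ := fun ω ↦ |X ω| ^ α
  have hZ : Measurable Z := by fun_prop
  have hscale : ∀ ω, (|X ω| / t) ^ α = Z ω / (2 * M) := fun ω ↦ by
    rw [div_rpow (abs_nonneg _) ht.le, ← rpow_mul (by positivity), one_div_mul_cancel hα.ne',
      rpow_one]
  have hmomZ : ∀ k : ℕ, 2 ≤ k →
      ∫ ω, Z ω ^ k ≤ k.factorial * S ^ 2 * R ^ (k - 2) / 2 :=
    fun k hk ↦ by
      simpa only [Z, ← rpow_mul_natCast (abs_nonneg _), mul_comm α] using hmom k hk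
  have ht_mem : t ∈ orliczSet α X ℙ := by
    refine ⟨ht, ?_⟩
    simp only [hscale]
    by_cases hexp : Integrable (fun ω ↦ exp (Z ω / (2 * M)))
    · have hZ0 : 0 ≤ᵐ[ℙ] Z := ae_of_all _ fun ω ↦ by positivity
      have hZ2 := integrable_pow_of_integrable_exp_div hZ.aestronglyMeasurable hZ0
        (by positivity) hexp 2
      refine (integral_exp_le_tsum_of_integral_pow_div_factorial_le (by fun_prop)
        (ae_of_all _ fun ω ↦ by positivity) hexp summable_geometric_two
        (integral_div_pow_div_factorial_le_half_pow hZ.aestronglyMeasurable hZ2 hS.le hR.le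
          (le_max_left S R) (le_max_right S R) hM hmomZ)).trans_eq tsum_geometric_two
    · rw [integral_undef hexp]
      norm_num
  exact ⟨⟨t, ht_mem⟩, csInf_le ⟨0, fun _ hs ↦ hs.1.le⟩ ht_mem⟩
end

section
/- Let k be an L-Lipschitz kernel on a set X with RKHS H, and let K_m(x, y) = ⟨S_m(x), S_m(y)⟩_{H^{⊗m}} be the level-m discrete-time signature kernel of sequences x = (x₁,…,x_{ℓ_x}) and y = (y₁,…,y_{ℓ_y}) in X, where S_m(x) = ∑_{i₁<…<i_m} δk_{x_{i₁}} ⊗ … ⊗ δk_{x_{i_m}} with δk_{x_i} = k(x_{i+1},·) - k(x_i,·). Then |K_m(x, y)| ≤ (L² ‖x‖_{1-var} ‖y‖_{1-var})^m / (m!)², where ‖x‖_{1-var} = ∑ᵢ ‖x_{i+1} - x_i‖₂. -/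
open scoped RealInnerProductSpace

/-- Strictly increasing `m`-tuples with entries in `Fin n`. -/
noncomputable def incrTuples (m n : ℕ) : Finset (Fin m → Fin n) := by
  classical exact Finset.univ.filter (fun c => StrictMono c)

lemma sum_incr_prod_le {m n : ℕ} (f : Fin n → ℝ) (hf : ∀ i, 0 ≤ f i) :
    (Nat.factorial m : ℝ) * ∑ c ∈ incrTuples m n, ∏ j, f (c j) ≤ (∑ i, f i) ^ m := by
  classical
  have hpow : (∑ i, f i) ^ m
      = ∑ p ∈ Fintype.piFinset (fun _ : Fin m => (Finset.univ : Finset (Fin n))),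
          ∏ j, f (p j) :=
    Finset.sum_pow' _ _ _
  have hfac : (Nat.factorial m : ℝ) * ∑ c ∈ incrTuples m n, ∏ j, f (c j)
      = ∑ q ∈ (Finset.univ : Finset (Equiv.Perm (Fin m))) ×ˢ incrTuples m n,
          ∏ j, f (q.2 (q.1 j)) := by
    rw [Finset.sum_product]
    have : ∀ σ : Equiv.Perm (Fin m),
        (∑ c ∈ incrTuples m n, ∏ j, f (c (σ j)))
          = ∑ c ∈ incrTuples m n, ∏ j, f (c j) := by
      intro σ
      refine Finset.sum_congr rfl fun c _ => ?_
      exact Equiv.prod_comp σ (fun j => f (c j))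
    rw [Finset.sum_congr rfl (fun σ _ => this σ), Finset.sum_const, Finset.card_univ,
      Fintype.card_perm, nsmul_eq_mul, Fintype.card_fin]
  rw [hfac, hpow]
  set s := (Finset.univ : Finset (Equiv.Perm (Fin m))) ×ˢ incrTuples m n with hs
  have hinj : Set.InjOn (fun q : Equiv.Perm (Fin m) × (Fin m → Fin n) => q.2 ∘ q.1) s := by
    rintro ⟨σ, c⟩ hq ⟨σ', c'⟩ hq' h
    have hc : StrictMono c := by
      have := (Finset.mem_product.1 (Finset.mem_coe.1 hq)).2
      simpa [incrTuples] using this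
    have hc' : StrictMono c' := by
      have := (Finset.mem_product.1 (Finset.mem_coe.1 hq')).2
      simpa [incrTuples] using this
    have hrange : Set.range (c ∘ ⇑σ) = Set.range c := by
      rw [Set.range_comp, Equiv.range_eq_univ, Set.image_univ]
    have hrange' : Set.range (c' ∘ ⇑σ') = Set.range c' := by
      rw [Set.range_comp, Equiv.range_eq_univ, Set.image_univ]
    have hcc' : c = c' := by
      haveI : WellFoundedLT (Fin m) := Finite.to_wellFoundedLT
      have hr := hc.range_inj hc'
      refine hr.1 ?_
      rw [← hrange, ← hrange']
      exact congrArg Set.range h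
    subst hcc'
    have hσ : σ = σ' := by
      ext i
      have : σ i = σ' i := hc.injective (congrFun h i)
      exact congrArg Fin.val this
    simp [hσ]
  have hmap : ∀ q ∈ s, q.2 ∘ q.1 ∈
      Fintype.piFinset (fun _ : Fin m => (Finset.univ : Finset (Fin n))) := by
    intro q _; simp
  calc ∑ q ∈ s, ∏ j, f (q.2 (q.1 j))
      = ∑ p ∈ s.image (fun q : Equiv.Perm (Fin m) × (Fin m → Fin n) => q.2 ∘ q.1),
          ∏ j, f (p j) := by
        rw [Finset.sum_image fun a ha b hb hab => hinj ha hb hab]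
        rfl
    _ ≤ ∑ p ∈ Fintype.piFinset (fun _ : Fin m => (Finset.univ : Finset (Fin n))),
          ∏ j, f (p j) := by
        refine Finset.sum_le_sum_of_subset_of_nonneg ?_ ?_
        · intro p hp
          simp
        · intro p _ _
          exact Finset.prod_nonneg fun j _ => hf _

theorem signature_kernel_bound (d : ℕ)
    {H F : Type*} [NormedAddCommGroup H] [InnerProductSpace ℝ H] [CompleteSpace H]
    [NormedAddCommGroup F] [InnerProductSpace ℝ F]
    (m : ℕ) (hm : 1 ≤ m)
    (T : MultilinearMap ℝ (fun _ : Fin m => H) F)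
    (hT : ∀ f g : Fin m → H, ⟪T f, T g⟫ = ∏ i, ⟪f i, g i⟫)
    (L : ℝ) (hL : 0 < L)
    (Φ : EuclideanSpace ℝ (Fin d) → H)
    (hΦ : ∀ u v, ‖Φ u - Φ v‖ ≤ L * ‖u - v‖)
    (ℓx ℓy : ℕ)
    (x : Fin (ℓx + 1) → EuclideanSpace ℝ (Fin d))
    (y : Fin (ℓy + 1) → EuclideanSpace ℝ (Fin d)) :
    |⟪∑ c ∈ incrTuples m ℓx, T fun j => Φ (x (c j).succ) - Φ (x (c j).castSucc),
       ∑ c ∈ incrTuples m ℓy, T fun j => Φ (y (c j).succ) - Φ (y (c j).castSucc)⟫| ≤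
      (L ^ 2 * (∑ i : Fin ℓx, ‖x i.succ - x i.castSucc‖) *
          (∑ i : Fin ℓy, ‖y i.succ - y i.castSucc‖)) ^ m /
        (Nat.factorial m : ℝ) ^ 2 := by
  classical
  set a : Fin ℓx → ℝ := fun i => L * ‖x i.succ - x i.castSucc‖ with ha
  set b : Fin ℓy → ℝ := fun i => L * ‖y i.succ - y i.castSucc‖ with hb
  have hanon : ∀ i, 0 ≤ a i := fun i => mul_nonneg hL.le (norm_nonneg _)
  have hbnon : ∀ i, 0 ≤ b i := fun i => mul_nonneg hL.le (norm_nonneg _)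
  have hexp : ⟪∑ c ∈ incrTuples m ℓx, T fun j => Φ (x (c j).succ) - Φ (x (c j).castSucc),
       ∑ c ∈ incrTuples m ℓy, T fun j => Φ (y (c j).succ) - Φ (y (c j).castSucc)⟫
      = ∑ c ∈ incrTuples m ℓx, ∑ c' ∈ incrTuples m ℓy,
          ∏ j, ⟪Φ (x (c j).succ) - Φ (x (c j).castSucc),
                Φ (y (c' j).succ) - Φ (y (c' j).castSucc)⟫ := by
    rw [sum_inner]
    refine Finset.sum_congr rfl fun c _ => ?_
    rw [inner_sum]
    exact Finset.sum_congr rfl fun c' _ => hT _ _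
  rw [hexp]
  have hterm : ∀ c ∈ incrTuples m ℓx, ∀ c' ∈ incrTuples m ℓy,
      |∏ j, ⟪Φ (x (c j).succ) - Φ (x (c j).castSucc),
             Φ (y (c' j).succ) - Φ (y (c' j).castSucc)⟫|
        ≤ (∏ j, a (c j)) * ∏ j, b (c' j) := by
    intro c _ c' _
    rw [Finset.abs_prod, ← Finset.prod_mul_distrib]
    refine Finset.prod_le_prod (fun j _ => abs_nonneg _) fun j _ => ?_
    calc |⟪Φ (x (c j).succ) - Φ (x (c j).castSucc),
           Φ (y (c' j).succ) - Φ (y (c' j).castSucc)⟫|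
        ≤ ‖Φ (x (c j).succ) - Φ (x (c j).castSucc)‖ *
            ‖Φ (y (c' j).succ) - Φ (y (c' j).castSucc)‖ := abs_real_inner_le_norm _ _
      _ ≤ a (c j) * b (c' j) :=
          mul_le_mul (hΦ _ _) (hΦ _ _) (norm_nonneg _) (hanon _)
  have habs : |∑ c ∈ incrTuples m ℓx, ∑ c' ∈ incrTuples m ℓy,
          ∏ j, ⟪Φ (x (c j).succ) - Φ (x (c j).castSucc),
                Φ (y (c' j).succ) - Φ (y (c' j).castSucc)⟫|
      ≤ (∑ c ∈ incrTuples m ℓx, ∏ j, a (c j)) *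
          ∑ c' ∈ incrTuples m ℓy, ∏ j, b (c' j) := by
    calc _ ≤ ∑ c ∈ incrTuples m ℓx, |∑ c' ∈ incrTuples m ℓy,
          ∏ j, ⟪Φ (x (c j).succ) - Φ (x (c j).castSucc),
                Φ (y (c' j).succ) - Φ (y (c' j).castSucc)⟫| := Finset.abs_sum_le_sum_abs _ _
      _ ≤ ∑ c ∈ incrTuples m ℓx, ∑ c' ∈ incrTuples m ℓy, |∏ j, ⟪Φ (x (c j).succ) - Φ (x (c j).castSucc),
                Φ (y (c' j).succ) - Φ (y (c' j).castSucc)⟫| :=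
          Finset.sum_le_sum fun c _ => Finset.abs_sum_le_sum_abs _ _
      _ ≤ ∑ c ∈ incrTuples m ℓx, ∑ c' ∈ incrTuples m ℓy, (∏ j, a (c j)) * ∏ j, b (c' j) :=
          Finset.sum_le_sum fun c hc => Finset.sum_le_sum fun c' hc' => hterm c hc c' hc'
      _ = _ := by rw [← Finset.sum_mul_sum]
  refine habs.trans ?_
  have hxA : (Nat.factorial m : ℝ) * ∑ c ∈ incrTuples m ℓx, ∏ j, a (c j) ≤ (∑ i, a i) ^ m :=
    sum_incr_prod_le a hanon
  have hyA : (Nat.factorial m : ℝ) * ∑ c' ∈ incrTuples m ℓy, ∏ j, b (c' j) ≤ (∑ i, b i) ^ m :=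
    sum_incr_prod_le b hbnon
  have hfacpos : (0:ℝ) < (Nat.factorial m : ℝ) := by positivity
  have hSx : ∑ c ∈ incrTuples m ℓx, ∏ j, a (c j) ≤ (∑ i, a i) ^ m / (Nat.factorial m : ℝ) :=
    (le_div_iff₀' hfacpos).2 hxA
  have hSy : ∑ c' ∈ incrTuples m ℓy, ∏ j, b (c' j) ≤ (∑ i, b i) ^ m / (Nat.factorial m : ℝ) :=
    (le_div_iff₀' hfacpos).2 hyA
  have hSxnon : 0 ≤ ∑ c ∈ incrTuples m ℓx, ∏ j, a (c j) :=
    Finset.sum_nonneg fun c _ => Finset.prod_nonneg fun j _ => hanon _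
  have hSynon : 0 ≤ ∑ c' ∈ incrTuples m ℓy, ∏ j, b (c' j) :=
    Finset.sum_nonneg fun c _ => Finset.prod_nonneg fun j _ => hbnon _
  have := mul_le_mul hSx hSy hSynon (by positivity)
  refine this.trans (le_of_eq ?_)
  have h1 : (∑ i, a i) * (∑ i, b i)
      = L ^ 2 * (∑ i : Fin ℓx, ‖x i.succ - x i.castSucc‖) *
          (∑ i : Fin ℓy, ‖y i.succ - y i.castSucc‖) := by
    simp only [ha, hb, ← Finset.mul_sum]
    ring
  rw [div_mul_div_comm, ← mul_pow, h1, ← sq]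
end
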